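/- arXiv:2408.04493 — 2 statements merged into one kernel-verified Lean document; each statement's English description precedes it below -/
import Mathlib

section
/- Let A be a C*-subalgebra of M₂(ℂ) that is neither {0}, ℂ·I, nor M₂(ℂ). Then there exists a unit vector n ∈ ℝ³ such that A = D(n) := {aI + b(n·σ) : a,b ∈ ℂ}; in particular A is commutative and two-dimensional. -/
/-!
Taking real and imaginary parts of a non-scalar element of `S` gives a non-scalar self-adjoint
one, hence (after subtracting a scalar and normalising) a unit `n` with `n·σ ∈ S`. Then
`E = (1 + n·σ)/2` is a rank-one projection in `S`, with complement `F = 1 - E`. If some `B ∈ S`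
had `X = E B F ≠ 0`, then `X Xᴴ = s E` with `s ≠ 0`, so the whole corner `E M₂ F = ℂ X` lies in
`S`, and so do its adjoint `F M₂ E` and the diagonal corners `ℂ E`, `ℂ F`, forcing `S = M₂(ℂ)`.
Otherwise every `B ∈ S` equals `E B E + F B F ∈ ℂ E + ℂ F = span {1, n·σ}`.
-/

open Matrix Complex
open scoped Matrix

noncomputable section

def σ1 : Matrix (Fin 2) (Fin 2) ℂ := !![0, 1; 1, 0]
def σ2 : Matrix (Fin 2) (Fin 2) ℂ := !![0, -Complex.I; Complex.I, 0]
def σ3 : Matrix (Fin 2) (Fin 2) ℂ := !![1, 0; 0, -1]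

def pauliDot (n : Fin 3 → ℝ) : Matrix (Fin 2) (Fin 2) ℂ :=
  (n 0 : ℂ) • σ1 + (n 1 : ℂ) • σ2 + (n 2 : ℂ) • σ3

open scoped ComplexStarModule ComplexOrder

theorem Matrix.det_eq_zero_of_isIdempotentElem_of_ne_one {K n : Type*} [Field K] [Fintype n]
    [DecidableEq n] {E : Matrix n n K} (hE : IsIdempotentElem E) (hE1 : E ≠ 1) : E.det = 0 := by
  by_contra h
  exact hE1 ((IsIdempotentElem.iff_eq_one_of_isUnit
    ((isUnit_iff_isUnit_det E).2 (isUnit_iff_ne_zero.2 h))).1 hE)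

theorem Matrix.det_one_sub_eq_zero_of_isIdempotentElem_of_ne_zero {K n : Type*} [Field K]
    [Fintype n] [DecidableEq n] {E : Matrix n n K} (hE : IsIdempotentElem E) (hE0 : E ≠ 0) :
    (1 - E).det = 0 :=
  det_eq_zero_of_isIdempotentElem_of_ne_one hE.one_sub (by simpa [sub_eq_self] using hE0)

theorem Matrix.mul_mul_eq_trace_smul_of_det_eq_zero {R : Type*} [CommRing R]
    {E : Matrix (Fin 2) (Fin 2) R} (hE : E.det = 0) (M : Matrix (Fin 2) (Fin 2) R) :
    E * M * E = (M * E).trace • E := by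
  rw [det_fin_two] at hE
  ext i j
  fin_cases i <;> fin_cases j <;>
    simp [mul_apply, Fin.sum_univ_two, trace_fin_two]
  · linear_combination -M 1 1 * hE
  · linear_combination M 0 1 * hE
  · linear_combination M 1 0 * hE
  · linear_combination -M 0 0 * hE

theorem Subalgebra.exists_isSelfAdjoint_notMem_bot {A : Type*} [Ring A] [StarRing A]
    [Algebra ℂ A] [StarModule ℂ A] {S : Subalgebra ℂ A} (hstar : ∀ a ∈ S, star a ∈ S)
    (hbot : S ≠ ⊥) : ∃ h ∈ S, IsSelfAdjoint h ∧ h ∉ (⊥ : Subalgebra ℂ A) := by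
  obtain ⟨a, haS, ha⟩ := SetLike.exists_of_lt (bot_lt_iff_ne_bot.2 hbot)
  by_contra! hsa
  have hre : (ℜ a : A) ∈ S := by
    rw [realPart_apply_coe, ← algebraMap_smul ℂ]
    exact S.smul_mem (S.add_mem haS (hstar a haS)) _
  have him : (ℑ a : A) ∈ S := by
    rw [imaginaryPart_apply_coe, ← algebraMap_smul ℂ]
    exact S.smul_mem (S.smul_mem (S.sub_mem haS (hstar a haS)) _) _
  refine ha ?_
  rw [← realPart_add_I_smul_imaginaryPart a]
  exact Subalgebra.add_mem _ (hsa _ hre (ℜ a).2) (Subalgebra.smul_mem _ (hsa _ him (ℑ a).2) _)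

section RankOneProjection

variable {E : Matrix (Fin 2) (Fin 2) ℂ}

theorem IsStarProjection.exists_corner_eq_smul (hE : IsStarProjection E) (hE0 : E ≠ 0)
    (hE1 : E ≠ 1) {B : Matrix (Fin 2) (Fin 2) ℂ} (hB : E * B * (1 - E) ≠ 0)
    (M : Matrix (Fin 2) (Fin 2) ℂ) :
    ∃ c : ℂ, E * M * (1 - E) = c • (E * B * (1 - E)) := by
  set F := 1 - E
  set X := E * B * F
  have hF : IsStarProjection F := hE.one_sub
  have hEH : Eᴴ = E := hE.isSelfAdjoint
  have hFH : Fᴴ = F := hF.isSelfAdjoint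
  have hXF : X * F = X := by simp only [X, mul_assoc, hF.isIdempotentElem.eq]
  have hEX : E * X = X := by simp only [X, ← mul_assoc, hE.isIdempotentElem.eq]
  have hXH : Xᴴ = F * Bᴴ * E := by simp only [X, conjTranspose_mul, hEH, hFH, mul_assoc]
  have hdetE : E.det = 0 := det_eq_zero_of_isIdempotentElem_of_ne_one hE.isIdempotentElem hE1
  have hdetF : F.det = 0 :=
    det_one_sub_eq_zero_of_isIdempotentElem_of_ne_zero hE.isIdempotentElem hE0
  clear_value X F
  have hFXH : F * Xᴴ = Xᴴ := by simp only [hXH, ← mul_assoc, hF.isIdempotentElem.eq]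
  have hXHE : Xᴴ * E = Xᴴ := by simp only [hXH, mul_assoc, hE.isIdempotentElem.eq]
  obtain ⟨s, hs⟩ : ∃ s : ℂ, X * Xᴴ = s • E := by
    refine ⟨(X * Xᴴ * E).trace, ?_⟩
    calc X * Xᴴ = E * (X * Xᴴ) * E := by rw [← mul_assoc, hEX, mul_assoc, hXHE]
      _ = _ := mul_mul_eq_trace_smul_of_det_eq_zero hdetE _
  have hs0 : s ≠ 0 := by
    rintro rfl
    exact hB (self_mul_conjTranspose_eq_zero.1 (by rwa [zero_smul] at hs))
  refine ⟨s⁻¹ * (Xᴴ * M * F).trace, ?_⟩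
  calc E * M * F = s⁻¹ • (s • E * M * F) := by
        rw [smul_mul_assoc, smul_mul_assoc, smul_smul, inv_mul_cancel₀ hs0, one_smul]
    _ = s⁻¹ • (X * (F * (Xᴴ * M) * F)) := by
        rw [← hs, ← mul_assoc F, hFXH]; simp only [mul_assoc]
    _ = _ := by
        rw [mul_mul_eq_trace_smul_of_det_eq_zero hdetF, mul_smul_comm, hXF, smul_smul]

variable {S : Subalgebra ℂ (Matrix (Fin 2) (Fin 2) ℂ)}

theorem Subalgebra.eq_top_of_corner_ne_zero (hstar : ∀ A ∈ S, Aᴴ ∈ S)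
    (hE : IsStarProjection E) (hE0 : E ≠ 0) (hE1 : E ≠ 1) (hES : E ∈ S)
    {B : Matrix (Fin 2) (Fin 2) ℂ} (hBS : B ∈ S) (hB : E * B * (1 - E) ≠ 0) : S = ⊤ := by
  set F := 1 - E with hFdef
  have hFS : F ∈ S := S.sub_mem S.one_mem hES
  have hdetE : E.det = 0 := det_eq_zero_of_isIdempotentElem_of_ne_one hE.isIdempotentElem hE1
  have hdetF : F.det = 0 :=
    det_one_sub_eq_zero_of_isIdempotentElem_of_ne_zero hE.isIdempotentElem hE0
  have hcorner (M : Matrix (Fin 2) (Fin 2) ℂ) : E * M * F ∈ S := by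
    obtain ⟨c, hc⟩ := hE.exists_corner_eq_smul hE0 hE1 hB M
    rw [hc]
    exact S.smul_mem (S.mul_mem (S.mul_mem hES hBS) hFS) c
  have hcorner_swap (M : Matrix (Fin 2) (Fin 2) ℂ) : F * M * E ∈ S := by
    have hEH : Eᴴ = E := hE.isSelfAdjoint
    have hFH : Fᴴ = F := hE.one_sub.isSelfAdjoint
    have h : F * M * E = (E * Mᴴ * F)ᴴ := by
      simp only [conjTranspose_mul, conjTranspose_conjTranspose, hEH, hFH, mul_assoc]
    rw [h]
    exact hstar _ (hcorner _)
  refine eq_top_iff.2 fun M _ => ?_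
  have hpeirce : M = E * M * E + E * M * F + F * M * E + F * M * F := by
    rw [hFdef]; noncomm_ring
  rw [hpeirce, mul_mul_eq_trace_smul_of_det_eq_zero hdetE,
    mul_mul_eq_trace_smul_of_det_eq_zero hdetF]
  exact S.add_mem (S.add_mem (S.add_mem (S.smul_mem hES _) (hcorner M)) (hcorner_swap M))
    (S.smul_mem hFS _)

theorem Subalgebra.exists_eq_smul_add_smul_one_sub (hstar : ∀ A ∈ S, Aᴴ ∈ S)
    (htop : S ≠ ⊤) (hE : IsStarProjection E) (hE0 : E ≠ 0) (hE1 : E ≠ 1) (hES : E ∈ S)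
    {B : Matrix (Fin 2) (Fin 2) ℂ} (hBS : B ∈ S) : ∃ a b : ℂ, B = a • E + b • (1 - E) := by
  have hF0 : 1 - E ≠ 0 := sub_ne_zero.2 hE1.symm
  have hF1 : 1 - E ≠ 1 := by simpa [sub_eq_self] using hE0
  have hEBF : E * B * (1 - E) = 0 := by
    by_contra h
    exact htop (eq_top_of_corner_ne_zero hstar hE hE0 hE1 hES hBS h)
  have hFBE : (1 - E) * B * E = 0 := by
    by_contra h
    refine htop (eq_top_of_corner_ne_zero hstar hE.one_sub hF0 hF1 (S.sub_mem S.one_mem hES)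
      hBS ?_)
    rwa [sub_sub_cancel]
  refine ⟨(B * E).trace, (B * (1 - E)).trace, ?_⟩
  rw [← mul_mul_eq_trace_smul_of_det_eq_zero
      (det_eq_zero_of_isIdempotentElem_of_ne_one hE.isIdempotentElem hE1),
    ← mul_mul_eq_trace_smul_of_det_eq_zero
      (det_one_sub_eq_zero_of_isIdempotentElem_of_ne_zero hE.isIdempotentElem hE0)]
  calc B = E * B * E + E * B * (1 - E) + (1 - E) * B * E + (1 - E) * B * (1 - E) := by
        noncomm_ring
    _ = E * B * E + (1 - E) * B * (1 - E) := by rw [hEBF, hFBE, add_zero, add_zero]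

end RankOneProjection

theorem IsSelfAdjoint.isStarProjection_inv_two_smul_one_add {A : Type*} [Ring A] [StarRing A]
    [Algebra ℂ A] [StarModule ℂ A] {P : A} (hP : IsSelfAdjoint P) (hPP : P * P = 1) :
    IsStarProjection ((2⁻¹ : ℂ) • (1 + P)) where
  isIdempotentElem := by
    simp only [IsIdempotentElem, smul_mul_smul_comm, add_mul, mul_add, hPP, one_mul, mul_one]
    module
  isSelfAdjoint := IsSelfAdjoint.smul (by simp [IsSelfAdjoint]) ((IsSelfAdjoint.one A).add hP)

theorem Subalgebra.toSubmodule_eq_span_of_involution_mem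
    {S : Subalgebra ℂ (Matrix (Fin 2) (Fin 2) ℂ)} (hstar : ∀ A ∈ S, Aᴴ ∈ S) (htop : S ≠ ⊤)
    {P : Matrix (Fin 2) (Fin 2) ℂ} (hPS : P ∈ S) (hPH : Pᴴ = P) (hPP : P * P = 1)
    (hP1 : P ≠ 1) (hPn1 : P ≠ -1) :
    Subalgebra.toSubmodule S = Submodule.span ℂ {1, P} := by
  set E : Matrix (Fin 2) (Fin 2) ℂ := (2⁻¹ : ℂ) • (1 + P)
  have hE : IsStarProjection E := IsSelfAdjoint.isStarProjection_inv_two_smul_one_add hPH hPP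
  have hPE : 1 + P = (2 : ℂ) • E := by
    rw [smul_smul, mul_inv_cancel₀ two_ne_zero, one_smul]
  have hE0 : E ≠ 0 := fun h =>
    hPn1 (eq_neg_of_add_eq_zero_right (by rw [hPE, h, smul_zero]))
  have hE1 : E ≠ 1 := fun h =>
    hP1 (add_left_cancel (by rw [hPE, h, two_smul] : 1 + P = 1 + 1))
  have hES : E ∈ S := S.smul_mem (S.add_mem S.one_mem hPS) _
  refine le_antisymm (fun B hBS => ?_) (Submodule.span_le.2 ?_)
  · obtain ⟨a, b, rfl⟩ := exists_eq_smul_add_smul_one_sub hstar htop hE hE0 hE1 hES hBS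
    rw [Submodule.mem_span_pair]
    exact ⟨(a + b) / 2, (a - b) / 2, by simp only [E]; module⟩
  · rintro _ (rfl | rfl)
    exacts [S.one_mem, hPS]

theorem pauliDot_eq (v : Fin 3 → ℝ) :
    pauliDot v = !![(v 2 : ℂ), v 0 - v 1 * I; v 0 + v 1 * I, -(v 2 : ℂ)] := by
  ext i j
  fin_cases i <;> fin_cases j <;> simp [pauliDot, σ1, σ2, σ3, sub_eq_add_neg]

theorem pauliDot_smul (r : ℝ) (v : Fin 3 → ℝ) :
    pauliDot (r • v) = (r : ℂ) • pauliDot v := by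
  simp only [pauliDot, Pi.smul_apply, smul_eq_mul, ofReal_mul, smul_add, smul_smul]

theorem conjTranspose_pauliDot (v : Fin 3 → ℝ) : (pauliDot v)ᴴ = pauliDot v := by
  rw [pauliDot_eq]
  ext i j
  fin_cases i <;> fin_cases j <;> simp [conjTranspose_apply, conj_ofReal, sub_eq_add_neg]

theorem trace_pauliDot (v : Fin 3 → ℝ) : (pauliDot v).trace = 0 := by
  simp [pauliDot_eq, trace_fin_two]

theorem pauliDot_mul_self (v : Fin 3 → ℝ) :
    pauliDot v * pauliDot v = ((v 0 ^ 2 + v 1 ^ 2 + v 2 ^ 2 : ℝ) : ℂ) • 1 := by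
  rw [pauliDot_eq]
  ext i j
  fin_cases i <;> fin_cases j <;> simp [mul_apply, Fin.sum_univ_two, one_apply]
  · linear_combination -(v 1 : ℂ) ^ 2 * I_sq
  · ring
  · ring
  · linear_combination -(v 1 : ℂ) ^ 2 * I_sq

theorem exists_eq_smul_one_add_pauliDot {H : Matrix (Fin 2) (Fin 2) ℂ} (hH : Hᴴ = H) :
    ∃ (c : ℂ) (v : Fin 3 → ℝ), H = c • 1 + pauliDot v := by
  have h00 : (H 0 0).im = 0 := conj_eq_iff_im.1 (congrFun (congrFun hH 0) 0)
  have h11 : (H 1 1).im = 0 := conj_eq_iff_im.1 (congrFun (congrFun hH 1) 1)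
  have h10 : H 1 0 = starRingEnd ℂ (H 0 1) := (congrFun (congrFun hH 1) 0).symm
  refine ⟨(H 0 0 + H 1 1) / 2, ![(H 0 1).re, -(H 0 1).im, ((H 0 0).re - (H 1 1).re) / 2], ?_⟩
  rw [pauliDot_eq]
  ext i j
  fin_cases i <;> fin_cases j <;> apply Complex.ext <;>
    simp [one_apply, h00, h11, h10] <;> ring

theorem Subalgebra.exists_unit_pauliDot_mem {S : Subalgebra ℂ (Matrix (Fin 2) (Fin 2) ℂ)}
    (hstar : ∀ A ∈ S, Aᴴ ∈ S) (hbot : S ≠ ⊥) :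
    ∃ n : Fin 3 → ℝ, n 0 ^ 2 + n 1 ^ 2 + n 2 ^ 2 = 1 ∧ pauliDot n ∈ S := by
  obtain ⟨H, hHS, hH, hHbot⟩ := S.exists_isSelfAdjoint_notMem_bot hstar hbot
  obtain ⟨c, v, rfl⟩ := exists_eq_smul_one_add_pauliDot hH
  have hvS : pauliDot v ∈ S := by simpa using S.sub_mem hHS (S.smul_mem S.one_mem c)
  have hs : 0 < v 0 ^ 2 + v 1 ^ 2 + v 2 ^ 2 := by
    refine lt_of_le_of_ne (by positivity) fun hs0 => hHbot ?_
    have hv : pauliDot v = 0 := self_mul_conjTranspose_eq_zero.1 <| by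
      rw [conjTranspose_pauliDot, pauliDot_mul_self, ← hs0, ofReal_zero, zero_smul]
    rw [hv, add_zero, ← Algebra.algebraMap_eq_smul_one]
    exact Subalgebra.algebraMap_mem _ c
  refine ⟨(√(v 0 ^ 2 + v 1 ^ 2 + v 2 ^ 2))⁻¹ • v, ?_, ?_⟩
  · simp only [Pi.smul_apply, smul_eq_mul, mul_pow, ← mul_add, inv_pow, Real.sq_sqrt hs.le]
    exact inv_mul_cancel₀ hs.ne'
  · rw [pauliDot_smul]
    exact S.smul_mem hvS _

theorem smul_one_ne_pauliDot {n : Fin 3 → ℝ} (hn : n 0 ^ 2 + n 1 ^ 2 + n 2 ^ 2 = 1) (a : ℂ) :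
    a • 1 ≠ pauliDot n := by
  intro h
  have ha : a = 0 := by simpa [trace_pauliDot] using congrArg trace h
  have hsq := pauliDot_mul_self n
  rw [← h, ha, hn] at hsq
  simp at hsq

theorem proper_starSubalgebra_of_M2_eq_Dn
    (S : Subalgebra ℂ (Matrix (Fin 2) (Fin 2) ℂ))
    (hstar : ∀ A ∈ S, Aᴴ ∈ S)
    (hbot : S ≠ ⊥) (htop : S ≠ ⊤) :
    ∃ n : Fin 3 → ℝ, n 0 ^ 2 + n 1 ^ 2 + n 2 ^ 2 = 1 ∧
      (S : Set (Matrix (Fin 2) (Fin 2) ℂ)) =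
        {A | ∃ a b : ℂ, A = a • (1 : Matrix (Fin 2) (Fin 2) ℂ) + b • pauliDot n} ∧
      (∀ A ∈ S, ∀ B ∈ S, A * B = B * A) ∧
      Module.finrank ℂ S = 2 := by
  obtain ⟨n, hn, hnS⟩ := S.exists_unit_pauliDot_mem hstar hbot
  have hPP : pauliDot n * pauliDot n = 1 := by rw [pauliDot_mul_self, hn, ofReal_one, one_smul]
  have hspan := S.toSubmodule_eq_span_of_involution_mem hstar htop hnS (conjTranspose_pauliDot n)
    hPP (fun h => smul_one_ne_pauliDot hn 1 (by rw [h, one_smul]))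
    (fun h => smul_one_ne_pauliDot hn (-1) (by rw [h, neg_one_smul]))
  have hmem (A : Matrix (Fin 2) (Fin 2) ℂ) :
      A ∈ S ↔ ∃ a b : ℂ, A = a • 1 + b • pauliDot n := by
    simp only [← Subalgebra.mem_toSubmodule, hspan, Submodule.mem_span_pair, eq_comm]
  refine ⟨n, hn, Set.ext hmem, fun A hA B hB => ?_, ?_⟩
  · obtain ⟨a, b, rfl⟩ := (hmem A).1 hA
    obtain ⟨c, d, rfl⟩ := (hmem B).1 hB
    simp only [add_mul, mul_add, smul_mul_smul_comm, one_mul, mul_one]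
    module
  · have hli : LinearIndependent ℂ ![1, pauliDot n] :=
      (LinearIndependent.pair_iff' one_ne_zero).2 (smul_one_ne_pauliDot hn)
    rw [← Subalgebra.finrank_toSubmodule, hspan, ← Matrix.range_cons_cons_empty _ _ ![],
      finrank_span_eq_card hli, Fintype.card_fin]
end
end

section
/- Let U_{ab} := exp((i/2)[(a+b)φ](I − σ³)) for a, b ∈ {0,1} and φ ∈ ℝ. Then for all a, b, a', b' ∈ {0,1} and all O, O' ∈ M₂(ℂ), the operators Σ_{b} (U_{ab}† O U_{ab}) ⊗ |b⟩⟨b| and Σ_{a'} |a'⟩⟨a'| ⊗ (U_{a'b'}† O' U_{a'b'}) commute in M₂(ℂ) ⊗ M₂(ℂ). -/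
open Matrix Complex
open scoped Matrix Kronecker

noncomputable section

/-- `U_{ab} = exp((i/2)(a+b)φ (I − σ³)) = diag(1, e^{i(a+b)φ})`. -/
def Uab (a b : Fin 2) (φ : ℝ) : Matrix (Fin 2) (Fin 2) ℂ :=
  NormedSpace.exp ((Complex.I / 2 * (((a : ℕ) : ℂ) + ((b : ℕ) : ℂ)) * (φ : ℂ)) •
    ((1 : Matrix (Fin 2) (Fin 2) ℂ) - σ3))

/-- the diagonal rank-one projectors `|b⟩⟨b|`. -/
def proj (b : Fin 2) : Matrix (Fin 2) (Fin 2) ℂ :=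
  fun i j => if i = b ∧ j = b then 1 else 0

/-!
Write `P θ = diag(1, e^{iθ})`, so that `U_{ab} = P(aφ) P(bφ)`. Both operators are conjugates, by
the same unitary controlled-phase gate `W = ∑_b P(bφ) ⊗ |b⟩⟨b| = ∑_a |a⟩⟨a| ⊗ P(aφ)`, of the
single-site operators `P(aφ)† O P(aφ) ⊗ 1` and `1 ⊗ P(b'φ)† O' P(b'φ)`, which commute.
-/

theorem Commute.star_mul_mul_of_mem_unitary {M : Type*} [Monoid M] [StarMul M] {u x y : M}
    (hu : u ∈ unitary M) (h : Commute x y) : Commute (star u * x * u) (star u * y * u) := by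
  have cancel (z : M) : u * (star u * z) = z := by
    rw [← mul_assoc, Unitary.mul_star_self_of_mem hu, one_mul]
  calc star u * x * u * (star u * y * u)
      = star u * (x * y) * u := by simp only [mul_assoc, cancel]
    _ = star u * (y * x) * u := by rw [h.eq]
    _ = star u * y * u * (star u * x * u) := by simp only [mul_assoc, cancel]

theorem commute_kronecker_one_one_kronecker {R m n : Type*} [CommSemiring R] [Fintype m]
    [DecidableEq m] [Fintype n] [DecidableEq n] (X : Matrix m m R) (Y : Matrix n n R) :
    Commute (X ⊗ₖ (1 : Matrix n n R)) ((1 : Matrix m m R) ⊗ₖ Y) := by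
  simp only [Commute, SemiconjBy, ← mul_kronecker_mul, Matrix.mul_one, Matrix.one_mul]

theorem kronecker_sum {R ι l m n p : Type*} [NonUnitalNonAssocSemiring R] (s : Finset ι)
    (A : Matrix l m R) (B : ι → Matrix n p R) :
    A ⊗ₖ ∑ i ∈ s, B i = ∑ i ∈ s, A ⊗ₖ B i := by
  ext
  simp only [kroneckerMap_apply, Matrix.sum_apply, Finset.mul_sum]

section ControlledConjugation

variable {R ι m n : Type*} [CommSemiring R] [StarRing R] [Fintype ι] [DecidableEq ι]
  [Fintype m] [Fintype n]

theorem conjTranspose_sum_kronecker_mul_kronecker_one_mul [DecidableEq n] (M : ι → Matrix m m R)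
    {P : ι → Matrix n n R} (hP : OrthogonalIdempotents P) (hPh : ∀ i, (P i).IsHermitian)
    (O : Matrix m m R) :
    (∑ i, M i ⊗ₖ P i)ᴴ * (O ⊗ₖ 1) * ∑ i, M i ⊗ₖ P i = ∑ i, ((M i)ᴴ * O * M i) ⊗ₖ P i := by
  simp only [conjTranspose_sum, conjTranspose_kronecker, Finset.sum_mul, Finset.mul_sum,
    ← mul_kronecker_mul, Matrix.mul_one, (hPh _).eq, hP.mul_eq, apply_ite (kroneckerMap _ _),
    kronecker_zero, Finset.sum_ite_eq', Finset.mem_univ, if_true]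

theorem conjTranspose_sum_kronecker_mul_one_kronecker_mul [DecidableEq m] (M : ι → Matrix n n R)
    {P : ι → Matrix m m R} (hP : OrthogonalIdempotents P) (hPh : ∀ i, (P i).IsHermitian)
    (O : Matrix n n R) :
    (∑ i, P i ⊗ₖ M i)ᴴ * (1 ⊗ₖ O) * ∑ i, P i ⊗ₖ M i = ∑ i, P i ⊗ₖ ((M i)ᴴ * O * M i) := by
  simp only [conjTranspose_sum, conjTranspose_kronecker, Finset.sum_mul, Finset.mul_sum,
    ← mul_kronecker_mul, Matrix.mul_one, (hPh _).eq, hP.mul_eq, apply_ite (kroneckerMap _),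
    ite_apply, zero_kronecker, Finset.sum_ite_eq', Finset.mem_univ, if_true]

end ControlledConjugation

theorem sum_kronecker_mem_unitaryGroup {R ι m n : Type*} [CommRing R] [StarRing R] [Fintype ι]
    [DecidableEq ι] [Fintype m] [DecidableEq m] [Fintype n] [DecidableEq n]
    {M : ι → Matrix m m R} (hM : ∀ i, M i ∈ unitaryGroup m R)
    {P : ι → Matrix n n R} (hP : CompleteOrthogonalIdempotents P)
    (hPh : ∀ i, (P i).IsHermitian) :
    ∑ i, M i ⊗ₖ P i ∈ unitaryGroup (m × n) R := by
  rw [mem_unitaryGroup_iff', star_eq_conjTranspose]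
  calc (∑ i, M i ⊗ₖ P i)ᴴ * ∑ i, M i ⊗ₖ P i
      = (∑ i, M i ⊗ₖ P i)ᴴ * (1 ⊗ₖ 1) * ∑ i, M i ⊗ₖ P i := by
        rw [one_kronecker_one, Matrix.mul_one]
    _ = ∑ i, ((M i)ᴴ * 1 * M i) ⊗ₖ P i :=
        conjTranspose_sum_kronecker_mul_kronecker_one_mul M hP.toOrthogonalIdempotents hPh 1
    _ = 1 := by
        simp only [Matrix.mul_one, ← star_eq_conjTranspose, Unitary.star_mul_self_of_mem (hM _),
          ← kronecker_sum, hP.complete, one_kronecker_one]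

def phaseGate (θ : ℝ) : Matrix (Fin 2) (Fin 2) ℂ :=
  diagonal ![1, exp (θ * I)]

theorem phaseGate_add (θ θ' : ℝ) : phaseGate (θ + θ') = phaseGate θ * phaseGate θ' := by
  simp only [phaseGate, diagonal_mul_diagonal]
  congr 1
  ext i
  fin_cases i <;> simp [add_mul, Complex.exp_add]

theorem phaseGate_mem_unitaryGroup (θ : ℝ) : phaseGate θ ∈ unitaryGroup (Fin 2) ℂ := by
  rw [mem_unitaryGroup_iff', star_eq_conjTranspose, phaseGate, diagonal_conjTranspose,
    diagonal_mul_diagonal, ← diagonal_one]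
  congr 1
  ext i
  fin_cases i <;> simp [← Complex.exp_conj, ← Complex.exp_add]

theorem one_sub_σ3 : 1 - σ3 = diagonal ![0, 2] := by
  ext i j
  fin_cases i <;> fin_cases j <;> norm_num [σ3]

theorem Uab_eq_phaseGate (a b : Fin 2) (φ : ℝ) :
    Uab a b φ = phaseGate (((a : ℕ) + (b : ℕ)) * φ) := by
  rw [Uab, one_sub_σ3, ← diagonal_smul, exp_diagonal, phaseGate]
  congr 1
  ext i
  fin_cases i
  · simp
  · simp [← Complex.exp_eq_exp_ℂ]
    ring_nf

theorem proj_eq_single (b : Fin 2) : proj b = single b b 1 := by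
  ext i j
  simp [proj, single_apply, eq_comm]

theorem proj_completeOrthogonalIdempotents : CompleteOrthogonalIdempotents proj := by
  refine CompleteOrthogonalIdempotents.iff_ortho_complete.mpr ⟨fun b c hbc => ?_, ?_⟩
  · simp [proj_eq_single, hbc]
  · simp only [proj_eq_single, sum_single_one]

theorem proj_isHermitian (b : Fin 2) : (proj b).IsHermitian := by
  simp [IsHermitian, proj_eq_single, conjTranspose_single]

def controlledPhase (φ : ℝ) : Matrix (Fin 2 × Fin 2) (Fin 2 × Fin 2) ℂ :=
  ∑ b : Fin 2, phaseGate ((b : ℕ) * φ) ⊗ₖ proj b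

theorem controlledPhase_eq_sum_proj_kronecker (φ : ℝ) :
    controlledPhase φ = ∑ a : Fin 2, proj a ⊗ₖ phaseGate ((a : ℕ) * φ) := by
  ext ⟨i, k⟩ ⟨j, l⟩
  fin_cases i <;> fin_cases k <;> fin_cases j <;> fin_cases l <;>
    simp [controlledPhase, phaseGate, proj, Fin.sum_univ_two]

theorem controlledPhase_mem_unitaryGroup (φ : ℝ) :
    controlledPhase φ ∈ unitaryGroup (Fin 2 × Fin 2) ℂ :=
  sum_kronecker_mem_unitaryGroup (fun _ => phaseGate_mem_unitaryGroup _)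
    proj_completeOrthogonalIdempotents proj_isHermitian

theorem sum_conj_Uab_kronecker_proj (φ : ℝ) (a : Fin 2) (O : Matrix (Fin 2) (Fin 2) ℂ) :
    ∑ b : Fin 2, ((Uab a b φ)ᴴ * O * Uab a b φ) ⊗ₖ proj b =
      (controlledPhase φ)ᴴ *
        (((phaseGate ((a : ℕ) * φ))ᴴ * O * phaseGate ((a : ℕ) * φ)) ⊗ₖ 1) * controlledPhase φ := by
  rw [controlledPhase, conjTranspose_sum_kronecker_mul_kronecker_one_mul _
    proj_completeOrthogonalIdempotents.toOrthogonalIdempotents proj_isHermitian]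
  refine Finset.sum_congr rfl fun b _ => ?_
  rw [Uab_eq_phaseGate, add_mul, phaseGate_add]
  simp only [conjTranspose_mul, Matrix.mul_assoc]

theorem sum_proj_kronecker_conj_Uab (φ : ℝ) (b : Fin 2) (O : Matrix (Fin 2) (Fin 2) ℂ) :
    ∑ a : Fin 2, proj a ⊗ₖ ((Uab a b φ)ᴴ * O * Uab a b φ) =
      (controlledPhase φ)ᴴ *
        (1 ⊗ₖ ((phaseGate ((b : ℕ) * φ))ᴴ * O * phaseGate ((b : ℕ) * φ))) * controlledPhase φ := by
  rw [controlledPhase_eq_sum_proj_kronecker, conjTranspose_sum_kronecker_mul_one_kronecker_mul _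
    proj_completeOrthogonalIdempotents.toOrthogonalIdempotents proj_isHermitian]
  refine Finset.sum_congr rfl fun a _ => ?_
  rw [Uab_eq_phaseGate, add_comm, add_mul, phaseGate_add]
  simp only [conjTranspose_mul, Matrix.mul_assoc]

theorem controlled_phase_local_rule_commutes (φ : ℝ)
    (a b' : Fin 2) (O O' : Matrix (Fin 2) (Fin 2) ℂ) :
    Commute
      (∑ b : Fin 2, ((Uab a b φ)ᴴ * O * Uab a b φ) ⊗ₖ proj b)
      (∑ a' : Fin 2, proj a' ⊗ₖ ((Uab a' b' φ)ᴴ * O' * Uab a' b' φ)) := by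
  rw [sum_conj_Uab_kronecker_proj, sum_proj_kronecker_conj_Uab, ← star_eq_conjTranspose]
  exact (commute_kronecker_one_one_kronecker _ _).star_mul_mul_of_mem_unitary
    (controlledPhase_mem_unitaryGroup φ)
end
end
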